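/- Let I be a nontrivial real interval, f : Iⁿ → I continuous, symmetric, cancellative, and associative, g its n-associative extension with g₁ = id, and c ∈ I with c < f(cⁿ). For x ∈ I and j, k, p, q ∈ ℕ with j+1, k, p, q+1 ∈ Aₙ: g(c^p) > g(x c^q) if and only if g(c^(kp)) > g(x^k c^(kq)), and also if and only if g(c^(p+j)) > g(x c^(q+j)); the same equivalences hold with '<' or '=' in place of '>'. -/

import Mathlib

/-- `f : Iⁿ → I` is associative in the `n`-ary sense: for each `i` with `i+1 < n`,
substituting `f` into positions `i` or `i+1` of a `(2n-1)`-tuple over `I` gives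
the same result. -/
def NAssocOn (n : ℕ) (I : Set ℝ) (f : (Fin n → ℝ) → ℝ) : Prop :=
  ∀ x : ℕ → ℝ, (∀ j, j < 2 * n - 1 → x j ∈ I) → ∀ i : ℕ, i + 1 < n →
    f (fun j : Fin n => if (j : ℕ) < i then x j
        else if (j : ℕ) = i then f (fun l : Fin n => x (i + (l : ℕ)))
        else x ((j : ℕ) + n - 1)) =
    f (fun j : Fin n => if (j : ℕ) < i + 1 then x j
        else if (j : ℕ) = i + 1 then f (fun l : Fin n => x (i + 1 + (l : ℕ)))
        else x ((j : ℕ) + n - 1))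

/-- `f` is symmetric on `Iⁿ`: invariant under all permutations of its arguments. -/
def SymmOn (n : ℕ) (I : Set ℝ) (f : (Fin n → ℝ) → ℝ) : Prop :=
  ∀ x : Fin n → ℝ, (∀ i, x i ∈ I) → ∀ σ : Equiv.Perm (Fin n), f (x ∘ σ) = f x

/-- `f` is cancellative on `Iⁿ`: one-to-one in each variable. -/
def CancOn (n : ℕ) (I : Set ℝ) (f : (Fin n → ℝ) → ℝ) : Prop :=
  ∀ k : Fin n, ∀ x x' : Fin n → ℝ, (∀ i, x i ∈ I) → (∀ i, x' i ∈ I) →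
    (∀ i, i ≠ k → x i = x' i) → f x = f x' → x k = x' k

/-!
Write `T_d u = f(u, d, …, d)`. Associativity lets a translation pass through any argument of
`f`, so translations commute and `T_{T_c d} = T_c^{n-1} ∘ T_d`. As `g(w c^{s(n-1)}) = T_c^s w`,
with `a = g(c^p)` and `b = g(x c^q)` the strings in the claim evaluate to `T_c^{j/(n-1)} a`,
`T_c^{j/(n-1)} b`, `P a` and `P b`, where `P u = g(u^k)`. A continuous cancellative `f` is
strictly monotone in each variable on the interval `I`: the direction cannot change over the
connected set `Iⁿ`, and it cannot be decreasing, because `T_u ∘ T_u` would then be increasing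
while associativity writes it as `f` applied to a single varying argument. So `T_c^{j/(n-1)}`
and `P` are strictly increasing on `I`, and both preserve `<`, `=` and `>`.
-/

open Function Set

theorem update_mem {n : ℕ} {I : Set ℝ} {y : Fin n → ℝ} (hy : ∀ i, y i ∈ I) (i : Fin n)
    {t : ℝ} (ht : t ∈ I) (j : Fin n) : update y i t j ∈ I := by
  rcases eq_or_ne j i with rfl | h
  · simpa
  · simpa [h] using hy j

/-- The tuple `(x₀, …, x_{i-1}, f(x_i, …, x_{i+n-1}), x_{i+n}, …, x_{2n-2})`. -/
def insertBlock {n : ℕ} (f : (Fin n → ℝ) → ℝ) (x : ℕ → ℝ) (i : ℕ) : Fin n → ℝ :=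
  fun j => if (j : ℕ) < i then x j
    else if (j : ℕ) = i then f (fun l : Fin n => x (i + l)) else x (j + n - 1)

theorem NAssocOn.apply_insertBlock_eq {n : ℕ} {I : Set ℝ} {f : (Fin n → ℝ) → ℝ}
    (hassoc : NAssocOn n I f) {x : ℕ → ℝ} (hx : ∀ j, j < 2 * n - 1 → x j ∈ I) :
    ∀ i, i < n → f (insertBlock f x i) = f (insertBlock f x 0)
  | 0, _ => rfl
  | i + 1, hi => (hassoc x hx i hi).symm.trans (apply_insertBlock_eq hassoc hx i (by omega))

theorem SymmOn.apply_update_comp {n : ℕ} {I : Set ℝ} {f : (Fin n → ℝ) → ℝ}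
    (hsym : SymmOn n I f) (σ : Equiv.Perm (Fin n)) {y : Fin n → ℝ} (hy : ∀ i, y i ∈ I)
    (i : Fin n) {t : ℝ} (ht : t ∈ I) :
    f (update (y ∘ σ) (σ.symm i) t) = f (update y i t) := by
  rw [← update_comp_equiv]
  exact hsym _ (update_mem hy i ht) σ

theorem CancOn.injOn_update {n : ℕ} {I : Set ℝ} {f : (Fin n → ℝ) → ℝ} (hcanc : CancOn n I f)
    {y : Fin n → ℝ} (hy : ∀ i, y i ∈ I) (i : Fin n) :
    InjOn (fun t => f (update y i t)) I := by
  intro t ht t' ht' h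
  simpa using hcanc i _ _ (update_mem hy i ht) (update_mem hy i ht') (fun j hj => by simp [hj]) h

theorem ContinuousOn.strictMonoOn_of_injOn_ordConnected {δ : Type*} [LinearOrder δ]
    [TopologicalSpace δ] [OrderClosedTopology δ] {s : Set ℝ} (hs : s.OrdConnected)
    {φ : ℝ → δ} (hc : ContinuousOn φ s) (hi : InjOn φ s) {u v : ℝ} (hu : u ∈ s) (hv : v ∈ s)
    (huv : u < v) (h : φ u < φ v) : StrictMonoOn φ s := by
  intro a ha b hb hab
  have hJ : Icc (min u a) (max v b) ⊆ s :=
    hs.out (by rcases min_choice u a with h | h <;> rw [h] <;> assumption)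
      (by rcases max_choice v b with h | h <;> rw [h] <;> assumption)
  have hJ' : min u a ≤ max v b := (min_le_left u a).trans (huv.le.trans (le_max_left v b))
  rcases (hc.mono hJ).strictMonoOn_of_injOn_Icc' hJ' (hi.mono hJ) with hmono | hanti
  · exact hmono ⟨min_le_right u a, hab.le.trans (le_max_right v b)⟩
      ⟨(min_le_right u a).trans hab.le, le_max_right v b⟩ hab
  · exact absurd (hanti ⟨min_le_left u a, huv.le.trans (le_max_left v b)⟩
      ⟨(min_le_left u a).trans huv.le, le_max_left v b⟩ huv) h.not_gt

theorem StrictMonoOn.iterate {α : Type*} [Preorder α] {g : α → α} {s : Set α}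
    (hg : StrictMonoOn g s) (hs : MapsTo g s s) (k : ℕ) : StrictMonoOn g^[k] s := by
  induction k with
  | zero => exact strictMono_id.strictMonoOn s
  | succ k ih =>
    intro a ha b hb hab
    rw [iterate_succ_apply', iterate_succ_apply']
    exact hg (hs.iterate k ha) (hs.iterate k hb) (ih ha hb hab)

def transl {m : ℕ} (f : (Fin (m + 1) → ℝ) → ℝ) (d u : ℝ) : ℝ := f (update (fun _ => d) 0 u)

def StrictMonoCoordOn (n : ℕ) (I : Set ℝ) (f : (Fin n → ℝ) → ℝ) : Prop :=
  ∀ y : Fin n → ℝ, (∀ i, y i ∈ I) → ∀ i, StrictMonoOn (fun t => f (update y i t)) I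

section Translations

variable {m : ℕ} {I : Set ℝ} {f : (Fin (m + 1) → ℝ) → ℝ}

theorem mapsTo_transl (hmap : ∀ x : Fin (m + 1) → ℝ, (∀ i, x i ∈ I) → f x ∈ I) {d : ℝ}
    (hd : d ∈ I) : MapsTo (transl f d) I I :=
  fun _ hu => hmap _ (update_mem (fun _ => hd) 0 hu)

theorem transl_apply_update_last (hassoc : NAssocOn (m + 1) I f) {y : Fin (m + 1) → ℝ}
    (hy : ∀ i, y i ∈ I) {c w : ℝ} (hc : c ∈ I) (hw : w ∈ I) :
    transl f c (f (update y (Fin.last m) w)) = f (update y (Fin.last m) (transl f c w)) := by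
  let x : ℕ → ℝ := fun j => if h : j < m then y ⟨j, by omega⟩ else if j = m then w else c
  have hx : ∀ j, j < 2 * (m + 1) - 1 → x j ∈ I := by
    intro j _
    simp only [x]
    split_ifs <;> first | exact hy _ | assumption
  have hleft : (fun l : Fin (m + 1) => x (0 + l)) = update y (Fin.last m) w := by
    ext ⟨l, hl⟩
    simp only [x, update_apply, Fin.ext_iff, Fin.val_last, zero_add]
    split_ifs <;> first | rfl | omega
  have hright : (fun l : Fin (m + 1) => x (m + l)) = update (fun _ => c) 0 w := by
    ext ⟨l, hl⟩
    simp only [x, update_apply, Fin.ext_iff, Fin.val_zero]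
    split_ifs <;> first | rfl | omega
  have h0 : insertBlock f x 0 = update (fun _ => c) 0 (f (update y (Fin.last m) w)) := by
    ext ⟨j, hj⟩
    simp only [insertBlock, hleft, x, update_apply, Fin.ext_iff, Fin.val_zero]
    split_ifs <;> first | rfl | omega
  have hm : insertBlock f x m = update y (Fin.last m) (transl f c w) := by
    ext ⟨j, hj⟩
    simp only [insertBlock, hright, x, transl, update_apply, Fin.ext_iff, Fin.val_last]
    split_ifs <;> first | rfl | omega
  have := hassoc.apply_insertBlock_eq hx m (by omega)
  rwa [h0, hm, eq_comm] at this

theorem transl_apply_update (hsym : SymmOn (m + 1) I f) (hassoc : NAssocOn (m + 1) I f)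
    (hmap : ∀ x : Fin (m + 1) → ℝ, (∀ i, x i ∈ I) → f x ∈ I) {y : Fin (m + 1) → ℝ}
    (hy : ∀ i, y i ∈ I) (i : Fin (m + 1)) {c w : ℝ} (hc : c ∈ I) (hw : w ∈ I) :
    transl f c (f (update y i w)) = f (update y i (transl f c w)) := by
  let σ := Equiv.swap i (Fin.last m)
  have hσ : σ.symm i = Fin.last m := by simp [σ]
  have hyσ : ∀ j, (y ∘ σ) j ∈ I := fun j => hy (σ j)
  rw [← hsym.apply_update_comp σ hy i hw, ← hsym.apply_update_comp σ hy i
    (mapsTo_transl hmap hc hw), hσ, transl_apply_update_last hassoc hyσ hc hw]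

theorem apply_piecewise_transl (hsym : SymmOn (m + 1) I f) (hassoc : NAssocOn (m + 1) I f)
    (hmap : ∀ x : Fin (m + 1) → ℝ, (∀ i, x i ∈ I) → f x ∈ I) {y : Fin (m + 1) → ℝ}
    (hy : ∀ i, y i ∈ I) {c : ℝ} (hc : c ∈ I) (S : Finset (Fin (m + 1))) :
    f (S.piecewise (fun i => transl f c (y i)) y) = (transl f c)^[S.card] (f y) := by
  induction S using Finset.induction_on with
  | empty => simp
  | insert i S hi ih =>
    have hmem : ∀ j, S.piecewise (fun i => transl f c (y i)) y j ∈ I := fun j => by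
      by_cases hj : j ∈ S
      · simpa [hj] using mapsTo_transl hmap hc (hy j)
      · simpa [hj] using hy j
    have hself : update (S.piecewise (fun i => transl f c (y i)) y) i (y i) =
        S.piecewise (fun i => transl f c (y i)) y := by
      simp [hi]
    rw [Finset.piecewise_insert, Finset.card_insert_of_notMem hi, iterate_succ_apply', ← ih,
      ← hself, transl_apply_update hsym hassoc hmap hmem i hc (hy i), update_idem]

theorem transl_transl (hsym : SymmOn (m + 1) I f) (hassoc : NAssocOn (m + 1) I f)
    (hmap : ∀ x : Fin (m + 1) → ℝ, (∀ i, x i ∈ I) → f x ∈ I) {c d u : ℝ} (hc : c ∈ I)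
    (hd : d ∈ I) (hu : u ∈ I) :
    transl f (transl f c d) u = (transl f c)^[m] (transl f d u) := by
  have h := apply_piecewise_transl hsym hassoc hmap (update_mem (fun _ => hd) 0 hu) hc
    (Finset.univ.erase 0)
  have hpw : (Finset.univ.erase (0 : Fin (m + 1))).piecewise
      (fun i => transl f c (update (fun _ => d) 0 u i)) (update (fun _ => d) 0 u) =
      update (fun _ => transl f c d) 0 u := by
    ext j
    rcases eq_or_ne j 0 with rfl | hj <;> simp [*]
  rw [hpw, Finset.card_erase_of_mem (Finset.mem_univ _), Finset.card_univ, Fintype.card_fin,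
    Nat.add_sub_cancel] at h
  exact h

theorem transl_iterate (hsym : SymmOn (m + 1) I f) (hassoc : NAssocOn (m + 1) I f)
    (hmap : ∀ x : Fin (m + 1) → ℝ, (∀ i, x i ∈ I) → f x ∈ I) {c d u : ℝ} (hc : c ∈ I)
    (hd : d ∈ I) (hu : u ∈ I) (s : ℕ) :
    transl f ((transl f c)^[s] d) u = (transl f c)^[s * m] (transl f d u) := by
  induction s generalizing d with
  | zero => simp
  | succ s ih =>
    rw [iterate_succ_apply, ih (mapsTo_transl hmap hc hd), transl_transl hsym hassoc hmap hc hd hu,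
      ← iterate_add_apply, Nat.succ_mul]

theorem transl_iterate_comm (hsym : SymmOn (m + 1) I f) (hassoc : NAssocOn (m + 1) I f)
    (hmap : ∀ x : Fin (m + 1) → ℝ, (∀ i, x i ∈ I) → f x ∈ I) {a b u : ℝ} (ha : a ∈ I)
    (hb : b ∈ I) (hu : u ∈ I) (k : ℕ) :
    transl f a ((transl f b)^[k] u) = (transl f b)^[k] (transl f a u) := by
  induction k with
  | zero => rfl
  | succ k ih =>
    rw [iterate_succ_apply', iterate_succ_apply', ← ih]
    exact (transl_apply_update hsym hassoc hmap (fun _ => ha) 0 hb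
      ((mapsTo_transl hmap hb).iterate k hu)).symm

theorem transl_iterate_self (hsym : SymmOn (m + 1) I f) (hassoc : NAssocOn (m + 1) I f)
    (hmap : ∀ x : Fin (m + 1) → ℝ, (∀ i, x i ∈ I) → f x ∈ I) {d x : ℝ} (hd : d ∈ I)
    (hx : x ∈ I) (r s : ℕ) :
    (transl f ((transl f d)^[s] x))^[r] ((transl f d)^[s] x) =
      (transl f d)^[(r * m + 1) * s] ((transl f x)^[r] x) := by
  induction r with
  | zero => simp
  | succ r ih =>
    have hxr : (transl f x)^[r] x ∈ I := (mapsTo_transl hmap hx).iterate r hx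
    rw [iterate_succ_apply', ih, transl_iterate hsym hassoc hmap hd hx
      ((mapsTo_transl hmap hd).iterate _ hxr), transl_iterate_comm hsym hassoc hmap hx hd hxr,
      ← iterate_add_apply, iterate_succ_apply']
    congr 1
    ring

theorem not_forall_strictAntiOn_update_zero (hm : 1 ≤ m) (hassoc : NAssocOn (m + 1) I f)
    (hmap : ∀ x : Fin (m + 1) → ℝ, (∀ i, x i ∈ I) → f x ∈ I) {u v : ℝ} (hu : u ∈ I)
    (hv : v ∈ I) (huv : u < v) :
    ¬ ∀ y : Fin (m + 1) → ℝ, (∀ i, y i ∈ I) → StrictAntiOn (fun t => f (update y 0 t)) I := by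
  intro hanti
  have hlast : (Fin.last m : Fin (m + 1)) ≠ 0 := by simp [Fin.ext_iff]; omega
  have hcomp : ∀ t ∈ I, transl f u (transl f u t) =
      f (update (update (fun _ => u) (Fin.last m) (transl f u u)) 0 t) := by
    intro t ht
    have := transl_apply_update_last hassoc (update_mem (fun _ => hu) 0 ht) hu hu
    rwa [update_eq_self_iff.mpr (by simp [hlast]), update_comm hlast.symm] at this
  have hT : StrictAntiOn (transl f u) I := hanti _ fun _ => hu
  have h₁ := hT (mapsTo_transl hmap hu hv) (mapsTo_transl hmap hu hu) (hT hu hv huv)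
  have h₂ := hanti _ (update_mem (fun _ => hu) (Fin.last m) (mapsTo_transl hmap hu hu)) hu hv huv
  rw [hcomp u hu, hcomp v hv] at h₁
  exact h₁.not_gt h₂

theorem strictMonoOn_update_zero (hm : 1 ≤ m) (hI : I.OrdConnected)
    (hmap : ∀ x : Fin (m + 1) → ℝ, (∀ i, x i ∈ I) → f x ∈ I)
    (hcont : ContinuousOn f {x | ∀ i, x i ∈ I}) (hcanc : CancOn (m + 1) I f)
    (hassoc : NAssocOn (m + 1) I f) {u v : ℝ} (hu : u ∈ I) (hv : v ∈ I) (huv : u < v)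
    {y : Fin (m + 1) → ℝ} (hy : ∀ i, y i ∈ I) :
    StrictMonoOn (fun t => f (update y 0 t)) I := by
  have hc : ∀ z : Fin (m + 1) → ℝ, (∀ i, z i ∈ I) → ContinuousOn (fun t => f (update z 0 t)) I :=
    fun z hz => hcont.comp
      ((continuous_const.update 0 continuous_id : Continuous fun t => update z 0 t).continuousOn)
      fun _ ht => update_mem hz 0 ht
  by_cases hpos : ∃ y₁ : Fin (m + 1) → ℝ, (∀ i, y₁ i ∈ I) ∧ f (update y₁ 0 u) < f (update y₁ 0 v)
  · obtain ⟨y₁, hy₁, h₁⟩ := hpos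
    refine (hc y hy).strictMonoOn_of_injOn_ordConnected hI (hcanc.injOn_update hy 0) hu hv huv ?_
    by_contra! hle
    have hψ : ContinuousOn (fun z => f (update z 0 v) - f (update z 0 u)) (univ.pi fun _ => I) :=
      (hcont.comp (continuous_id.update 0 continuous_const).continuousOn
        fun z hz => update_mem (mem_univ_pi.1 hz) 0 hv).sub
      (hcont.comp (continuous_id.update 0 continuous_const).continuousOn
        fun z hz => update_mem (mem_univ_pi.1 hz) 0 hu)
    obtain ⟨z, hz, hz0⟩ := (isPreconnected_univ_pi fun _ => hI.isPreconnected).intermediate_value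
      (mem_univ_pi.2 hy) (mem_univ_pi.2 hy₁) hψ ⟨sub_nonpos.2 hle, (sub_pos.2 h₁).le⟩
    exact huv.ne' (hcanc.injOn_update (mem_univ_pi.1 hz) 0 hv hu (sub_eq_zero.1 hz0))
  · push Not at hpos
    refine absurd (fun z hz => ?_) (not_forall_strictAntiOn_update_zero hm hassoc hmap hu hv huv)
    exact (hc z hz).strictMonoOn_of_injOn_ordConnected (δ := ℝᵒᵈ) hI (hcanc.injOn_update hz 0)
      hu hv huv ((hpos z hz).lt_of_ne fun h => huv.ne' (hcanc.injOn_update hz 0 hv hu h))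

theorem strictMonoCoordOn_of_nAssocOn (hm : 1 ≤ m) (hI : I.OrdConnected)
    (hne : ∃ a ∈ I, ∃ b ∈ I, a ≠ b) (hmap : ∀ x : Fin (m + 1) → ℝ, (∀ i, x i ∈ I) → f x ∈ I)
    (hcont : ContinuousOn f {x | ∀ i, x i ∈ I}) (hsym : SymmOn (m + 1) I f)
    (hcanc : CancOn (m + 1) I f) (hassoc : NAssocOn (m + 1) I f) :
    StrictMonoCoordOn (m + 1) I f := by
  obtain ⟨u, hu, v, hv, huv⟩ : ∃ u ∈ I, ∃ v ∈ I, u < v := by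
    obtain ⟨a, ha, b, hb, hab⟩ := hne
    rcases hab.lt_or_gt with h | h
    exacts [⟨a, ha, b, hb, h⟩, ⟨b, hb, a, ha, h⟩]
  intro y hy i t ht t' ht' htt'
  let σ := Equiv.swap i 0
  have hσ : σ.symm i = 0 := by simp [σ]
  have h0 := strictMonoOn_update_zero hm hI hmap hcont hcanc hassoc hu hv huv
    (y := y ∘ σ) (fun j => hy (σ j)) ht ht' htt'
  rw [← hσ] at h0
  beta_reduce at h0 ⊢
  rwa [hsym.apply_update_comp σ hy i ht, hsym.apply_update_comp σ hy i ht'] at h0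

end Translations

namespace StrictMonoCoordOn

theorem monotoneOn {n : ℕ} {I : Set ℝ} {f : (Fin n → ℝ) → ℝ} (h : StrictMonoCoordOn n I f) :
    MonotoneOn f (univ.pi fun _ => I) := by
  intro w hw w' hw' hle
  rw [mem_univ_pi] at hw hw'
  suffices ∀ S : Finset (Fin n), f w ≤ f (S.piecewise w' w) by
    simpa using this Finset.univ
  intro S
  induction S using Finset.induction_on with
  | empty => simp
  | insert i S hi ih =>
    have hmem : ∀ j, S.piecewise w' w j ∈ I := fun j => by
      by_cases hj : j ∈ S <;> simp [hj, hw j, hw' j]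
    have hself : update (S.piecewise w' w) i (w i) = S.piecewise w' w := by simp [hi]
    rw [Finset.piecewise_insert]
    refine ih.trans ?_
    conv_lhs => rw [← hself]
    exact (h _ hmem i).monotoneOn (hw i) (hw' i) (hle i)

variable {m : ℕ} {I : Set ℝ} {f : (Fin (m + 1) → ℝ) → ℝ}

theorem transl_lt_transl (h : StrictMonoCoordOn (m + 1) I f) {a b u v : ℝ} (ha : a ∈ I)
    (hb : b ∈ I) (hu : u ∈ I) (hv : v ∈ I) (hab : a ≤ b) (huv : u < v) :
    transl f a u < transl f b v :=
  calc transl f a u < transl f a v := h _ (fun _ => ha) 0 hu hv huv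
    _ ≤ transl f b v := h.monotoneOn (mem_univ_pi.2 (update_mem (fun _ => ha) 0 hv))
        (mem_univ_pi.2 (update_mem (fun _ => hb) 0 hv))
        fun j => by rcases eq_or_ne j 0 with rfl | hj <;> simp [*]

theorem strictMonoOn_iterate_transl (h : StrictMonoCoordOn (m + 1) I f)
    (hmap : ∀ x : Fin (m + 1) → ℝ, (∀ i, x i ∈ I) → f x ∈ I) {d : ℝ} (hd : d ∈ I) (k : ℕ) :
    StrictMonoOn (transl f d)^[k] I :=
  StrictMonoOn.iterate (fun _ hu _ hv huv => h.transl_lt_transl hd hd hu hv le_rfl huv)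
    (mapsTo_transl hmap hd) k

theorem strictMonoOn_transl_iterate_self (h : StrictMonoCoordOn (m + 1) I f)
    (hmap : ∀ x : Fin (m + 1) → ℝ, (∀ i, x i ∈ I) → f x ∈ I) (r : ℕ) :
    StrictMonoOn (fun a => (transl f a)^[r] a) I := by
  intro a ha b hb hab
  induction r with
  | zero => exact hab
  | succ r ih =>
    simp only [iterate_succ_apply']
    exact h.transl_lt_transl ha hb ((mapsTo_transl hmap ha).iterate r ha)
      ((mapsTo_transl hmap hb).iterate r hb) hab.le ih

end StrictMonoCoordOn

section

variable {m : ℕ} {f : (Fin (m + 1) → ℝ) → ℝ} {g : List ℝ → ℝ}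

theorem getD_cons_replicate (w d : ℝ) (i : Fin (m + 1)) :
    (w :: List.replicate m d).getD i 0 = update (fun _ => d) 0 w i := by
  induction i using Fin.cases with
  | zero => simp
  | succ i => simp [List.getD, Fin.succ_ne_zero]

theorem apply_append_replicate
    (hgn : ∀ l : List ℝ, l.length = m + 1 → g l = f (fun i : Fin (m + 1) => l.getD i 0))
    (hgrec : ∀ l r : List ℝ, l ≠ [] → l.length % m = 1 % m → r.length = m →
      g (l ++ r) = g (g l :: r))
    {l : List ℝ} (hl : l ≠ []) (hlen : l.length % m = 1 % m) (d : ℝ) (s : ℕ) :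
    g (l ++ List.replicate (s * m) d) = (transl f d)^[s] (g l) := by
  induction s with
  | zero => simp
  | succ s ih =>
    have hne : l ++ List.replicate (s * m) d ≠ [] := by simp [hl]
    have hlen' : (l ++ List.replicate (s * m) d).length % m = 1 % m := by
      simpa [Nat.add_mul_mod_self_right] using hlen
    rw [Nat.succ_mul, List.replicate_add, ← List.append_assoc,
      hgrec _ _ hne hlen' List.length_replicate, hgn _ (by simp), iterate_succ_apply', ← ih]
    simp only [getD_cons_replicate]
    rfl

theorem apply_replicate_add_mul
    (hgn : ∀ l : List ℝ, l.length = m + 1 → g l = f (fun i : Fin (m + 1) => l.getD i 0))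
    (hgrec : ∀ l r : List ℝ, l ≠ [] → l.length % m = 1 % m → r.length = m →
      g (l ++ r) = g (g l :: r))
    {p : ℕ} (hp : p % m = 1 % m) (hp1 : 1 ≤ p) (d : ℝ) (s : ℕ) :
    g (List.replicate (p + s * m) d) = (transl f d)^[s] (g (List.replicate p d)) := by
  rw [List.replicate_add]
  exact apply_append_replicate hgn hgrec (by simp; omega) (by simpa using hp) d s

theorem apply_cons_replicate_add_mul
    (hgn : ∀ l : List ℝ, l.length = m + 1 → g l = f (fun i : Fin (m + 1) => l.getD i 0))
    (hgrec : ∀ l r : List ℝ, l ≠ [] → l.length % m = 1 % m → r.length = m →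
      g (l ++ r) = g (g l :: r))
    {q : ℕ} (hq : q % m = 0) (x d : ℝ) (s : ℕ) :
    g (x :: List.replicate (q + s * m) d) = (transl f d)^[s] (g (x :: List.replicate q d)) := by
  rw [List.replicate_add, ← List.cons_append]
  exact apply_append_replicate hgn hgrec (by simp) (by simp [Nat.add_mod, hq]) d s

theorem apply_cons_replicate (hg1 : ∀ a : ℝ, g [a] = a)
    (hgn : ∀ l : List ℝ, l.length = m + 1 → g l = f (fun i : Fin (m + 1) => l.getD i 0))
    (hgrec : ∀ l r : List ℝ, l ≠ [] → l.length % m = 1 % m → r.length = m →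
      g (l ++ r) = g (g l :: r))
    (w d : ℝ) (s : ℕ) :
    g (w :: List.replicate (s * m) d) = (transl f d)^[s] w := by
  simpa [hg1] using apply_append_replicate hgn hgrec (List.cons_ne_nil w []) rfl d s

theorem apply_cons_replicate_mem {I : Set ℝ}
    (hmap : ∀ x : Fin (m + 1) → ℝ, (∀ i, x i ∈ I) → f x ∈ I) (hg1 : ∀ a : ℝ, g [a] = a)
    (hgn : ∀ l : List ℝ, l.length = m + 1 → g l = f (fun i : Fin (m + 1) => l.getD i 0))
    (hgrec : ∀ l r : List ℝ, l ≠ [] → l.length % m = 1 % m → r.length = m →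
      g (l ++ r) = g (g l :: r))
    {w d : ℝ} (hw : w ∈ I) (hd : d ∈ I) (s : ℕ) :
    g (w :: List.replicate (s * m) d) ∈ I := by
  rw [apply_cons_replicate hg1 hgn hgrec]
  exact (mapsTo_transl hmap hd).iterate s hw

theorem apply_replicate_append_replicate {I : Set ℝ} (hsym : SymmOn (m + 1) I f)
    (hassoc : NAssocOn (m + 1) I f) (hmap : ∀ x : Fin (m + 1) → ℝ, (∀ i, x i ∈ I) → f x ∈ I)
    (hg1 : ∀ a : ℝ, g [a] = a)
    (hgn : ∀ l : List ℝ, l.length = m + 1 → g l = f (fun i : Fin (m + 1) => l.getD i 0))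
    (hgrec : ∀ l r : List ℝ, l ≠ [] → l.length % m = 1 % m → r.length = m →
      g (l ++ r) = g (g l :: r))
    {x d : ℝ} (hx : x ∈ I) (hd : d ∈ I) (r s : ℕ) :
    g (List.replicate (r * m + 1) x ++ List.replicate ((r * m + 1) * (s * m)) d) =
      (transl f (g (x :: List.replicate (s * m) d)))^[r] (g (x :: List.replicate (s * m) d)) := by
  have hx' : g (List.replicate (r * m + 1) x) = (transl f x)^[r] x := by
    rw [List.replicate_succ, apply_cons_replicate hg1 hgn hgrec]
  rw [← mul_assoc, apply_append_replicate hgn hgrec (by simp) (by simp), hx',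
    apply_cons_replicate hg1 hgn hgrec, transl_iterate_self hsym hassoc hmap hd hx]

theorem apply_replicate_mul {I : Set ℝ} (hsym : SymmOn (m + 1) I f)
    (hassoc : NAssocOn (m + 1) I f) (hmap : ∀ x : Fin (m + 1) → ℝ, (∀ i, x i ∈ I) → f x ∈ I)
    (hg1 : ∀ a : ℝ, g [a] = a)
    (hgn : ∀ l : List ℝ, l.length = m + 1 → g l = f (fun i : Fin (m + 1) => l.getD i 0))
    (hgrec : ∀ l r : List ℝ, l ≠ [] → l.length % m = 1 % m → r.length = m →
      g (l ++ r) = g (g l :: r))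
    {d : ℝ} (hd : d ∈ I) (r s : ℕ) :
    g (List.replicate ((r * m + 1) * (s * m + 1)) d) =
      (transl f (g (List.replicate (s * m + 1) d)))^[r] (g (List.replicate (s * m + 1) d)) := by
  rw [List.replicate_succ (n := s * m), ← apply_replicate_append_replicate hsym hassoc hmap hg1
    hgn hgrec hd hd, ← List.replicate_add]
  congr 2
  ring

end

theorem exists_eq_mul_add_one {m k : ℕ} (hk : k % m = 1 % m) (hk1 : 1 ≤ k) :
    ∃ r, k = r * m + 1 := by
  obtain ⟨r, hr⟩ := (Nat.modEq_iff_dvd' hk1).mp hk.symm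
  exact ⟨r, by rw [mul_comm, ← hr]; omega⟩

theorem stmt_13_general (n : ℕ) (hn : 2 ≤ n) (I : Set ℝ) (hI : I.OrdConnected)
    (hne : ∃ a ∈ I, ∃ b ∈ I, a ≠ b)
    (f : (Fin n → ℝ) → ℝ)
    (hmap : ∀ x : Fin n → ℝ, (∀ i, x i ∈ I) → f x ∈ I)
    (hcont : ContinuousOn f {x | ∀ i, x i ∈ I})
    (hsym : SymmOn n I f) (hcanc : CancOn n I f) (hassoc : NAssocOn n I f)
    (g : List ℝ → ℝ)
    -- g is the n-associative extension of f with g₁ = id: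
    (hg1 : ∀ a : ℝ, g [a] = a)
    (hgn : ∀ l : List ℝ, l.length = n → g l = f (fun i : Fin n => l.getD (i : ℕ) 0))
    (hgrec : ∀ l r : List ℝ, l ≠ [] → l.length % (n - 1) = 1 % (n - 1) →
      r.length = n - 1 → g (l ++ r) = g (g l :: r))
    (c : ℝ) (hc : c ∈ I)
    :
    ∀ x ∈ I, ∀ j k p q : ℕ,
      (j + 1) % (n - 1) = 1 % (n - 1) → k % (n - 1) = 1 % (n - 1) → 1 ≤ k →
      p % (n - 1) = 1 % (n - 1) → 1 ≤ p → q % (n - 1) = 0 →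
      ((g (List.replicate p c) > g (x :: List.replicate q c) ↔
          g (List.replicate (k * p) c) >
            g (List.replicate k x ++ List.replicate (k * q) c)) ∧
        (g (List.replicate p c) > g (x :: List.replicate q c) ↔
          g (List.replicate (p + j) c) > g (x :: List.replicate (q + j) c))) ∧
      ((g (List.replicate p c) < g (x :: List.replicate q c) ↔
          g (List.replicate (k * p) c) <
            g (List.replicate k x ++ List.replicate (k * q) c)) ∧
        (g (List.replicate p c) < g (x :: List.replicate q c) ↔
          g (List.replicate (p + j) c) < g (x :: List.replicate (q + j) c))) ∧
      ((g (List.replicate p c) = g (x :: List.replicate q c) ↔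
          g (List.replicate (k * p) c) =
            g (List.replicate k x ++ List.replicate (k * q) c)) ∧
        (g (List.replicate p c) = g (x :: List.replicate q c) ↔
          g (List.replicate (p + j) c) = g (x :: List.replicate (q + j) c))) := by
  obtain ⟨m, rfl⟩ : ∃ m, n = m + 1 := ⟨n - 1, by omega⟩
  simp only [Nat.add_sub_cancel] at hgrec ⊢
  intro x hx j k p q hj hk hk1 hp hp1 hq
  obtain ⟨j', hj'⟩ := exists_eq_mul_add_one hj (by omega)
  obtain rfl : j = j' * m := by omega
  obtain ⟨r, rfl⟩ := exists_eq_mul_add_one hk hk1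
  obtain ⟨p', rfl⟩ := exists_eq_mul_add_one hp hp1
  obtain ⟨q', rfl⟩ := exists_eq_mul_left_of_dvd (Nat.dvd_of_mod_eq_zero hq)
  rw [apply_replicate_add_mul hgn hgrec hp hp1, apply_cons_replicate_add_mul hgn hgrec hq,
    apply_replicate_mul hsym hassoc hmap hg1 hgn hgrec hc,
    apply_replicate_append_replicate hsym hassoc hmap hg1 hgn hgrec hx hc]
  have ha : g (List.replicate (p' * m + 1) c) ∈ I := by
    simpa only [List.replicate_succ] using apply_cons_replicate_mem hmap hg1 hgn hgrec hc hc p'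
  have hb := apply_cons_replicate_mem hmap hg1 hgn hgrec hx hc q'
  have hmono := strictMonoCoordOn_of_nAssocOn (by omega) hI hne hmap hcont hsym hcanc hassoc
  have hτ := hmono.strictMonoOn_iterate_transl hmap hc j'
  have hP := hmono.strictMonoOn_transl_iterate_self hmap r
  exact ⟨⟨(hP.lt_iff_lt hb ha).symm, (hτ.lt_iff_lt hb ha).symm⟩,
    ⟨(hP.lt_iff_lt ha hb).symm, (hτ.lt_iff_lt ha hb).symm⟩,
    ⟨(hP.eq_iff_eq ha hb).symm, (hτ.eq_iff_eq ha hb).symm⟩⟩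

/-- Claim 4: for `x ∈ I` and `j, k, p, q ∈ ℕ` with `j+1, k, p, q+1 ∈ Aₙ`,
`g(c^p) > g(x c^q)` iff `g(c^{kp}) > g(x^k c^{kq})` iff `g(c^{p+j}) > g(x c^{q+j})`,
and the same equivalences hold with `<` or `=` in place of `>`. -/
theorem stmt_13 (n : ℕ) (hn : 2 ≤ n) (I : Set ℝ) (hI : I.OrdConnected)
    (hne : ∃ a ∈ I, ∃ b ∈ I, a ≠ b)
    (f : (Fin n → ℝ) → ℝ)
    (hmap : ∀ x : Fin n → ℝ, (∀ i, x i ∈ I) → f x ∈ I)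
    (hcont : ContinuousOn f {x | ∀ i, x i ∈ I})
    (hsym : SymmOn n I f) (hcanc : CancOn n I f) (hassoc : NAssocOn n I f)
    (g : List ℝ → ℝ)
    -- g is the n-associative extension of f with g₁ = id:
    (hg1 : ∀ a : ℝ, g [a] = a)
    (hgn : ∀ l : List ℝ, l.length = n → g l = f (fun i : Fin n => l.getD (i : ℕ) 0))
    (hgrec : ∀ l r : List ℝ, l ≠ [] → l.length % (n - 1) = 1 % (n - 1) →
      r.length = n - 1 → g (l ++ r) = g (g l :: r))
    (c : ℝ) (hc : c ∈ I) (hcf : c < f (fun _ => c))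
    :
    ∀ x ∈ I, ∀ j k p q : ℕ,
      (j + 1) % (n - 1) = 1 % (n - 1) → k % (n - 1) = 1 % (n - 1) → 1 ≤ k →
      p % (n - 1) = 1 % (n - 1) → 1 ≤ p → q % (n - 1) = 0 →
      ((g (List.replicate p c) > g (x :: List.replicate q c) ↔
          g (List.replicate (k * p) c) >
            g (List.replicate k x ++ List.replicate (k * q) c)) ∧
        (g (List.replicate p c) > g (x :: List.replicate q c) ↔
          g (List.replicate (p + j) c) > g (x :: List.replicate (q + j) c))) ∧
      ((g (List.replicate p c) < g (x :: List.replicate q c) ↔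
          g (List.replicate (k * p) c) <
            g (List.replicate k x ++ List.replicate (k * q) c)) ∧
        (g (List.replicate p c) < g (x :: List.replicate q c) ↔
          g (List.replicate (p + j) c) < g (x :: List.replicate (q + j) c))) ∧
      ((g (List.replicate p c) = g (x :: List.replicate q c) ↔
          g (List.replicate (k * p) c) =
            g (List.replicate k x ++ List.replicate (k * q) c)) ∧
        (g (List.replicate p c) = g (x :: List.replicate q c) ↔
          g (List.replicate (p + j) c) = g (x :: List.replicate (q + j) c))) :=
  stmt_13_general n hn I hI hne f hmap hcont hsym hcanc hassoc g hg1 hgn hgrec c hc
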